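/- Let A be a real n×n matrix that is diagonalizable over ℝ, say A = P·Λ·P⁻¹ with P invertible and Λ = diag(λ₁,…,λₙ), and suppose there is λ* > 0 with λᵢ ≥ λ* for all i. Let H be symmetric positive definite, let S be symmetric, and let N be a real n×n matrix with H·A = S + N. If ‖P‖·‖P⁻¹‖·‖H⁻¹·N‖ < λ*, where ‖·‖ denotes the operator norm of matrices acting on Euclidean ℝⁿ, then S is positive definite. -/

import Mathlib

open Matrix

/-- A real square matrix is *normally elliptic* if every eigenvalue
(i.e. every element of the spectrum of the associated complex matrix)
has positive real part. -/
def NormallyElliptic {n : ℕ} (A : Matrix (Fin n) (Fin n) ℝ) : Prop :=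
  ∀ μ ∈ spectrum ℂ (A.map Complex.ofReal), 0 < μ.re

/-- A (possibly nonsymmetric) real matrix is positive definite if `zᵀ M z > 0`
for all nonzero `z ∈ ℝⁿ`. -/
def PosDefMat {n : ℕ} (M : Matrix (Fin n) (Fin n) ℝ) : Prop :=
  ∀ z : Fin n → ℝ, z ≠ 0 → 0 < z ⬝ᵥ M.mulVec z


/-- The operator norm of a matrix acting on Euclidean ℝⁿ. -/
noncomputable def matOpNorm {n : ℕ} (M : Matrix (Fin n) (Fin n) ℝ) : ℝ :=
  ‖Matrix.toEuclideanCLM (𝕜 := ℝ) M‖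

/-! If `S` were not positive definite, the pencil `S - μ H` would have a generalized eigenvalue
`μ ≤ 0`: write `H = Bᴴ B` and diagonalise the symmetric matrix `B⁻ᴴ S B⁻¹`. Since `H A = S + N`,
its eigenvector `v` satisfies `A v = μ v + H⁻¹ N v`, so `μ` is an eigenvalue of `A - H⁻¹ N`, and
the Bauer–Fike theorem puts it within `‖P‖ ‖P⁻¹‖ ‖H⁻¹ N‖ < λ*` of some `λᵢ ≥ λ*`, which is
impossible for `μ ≤ 0`. -/

open scoped ComplexOrder

section
variable {𝕜 ι : Type*} [RCLike 𝕜] [Fintype ι] [DecidableEq ι]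

open scoped MatrixOrder in
theorem exists_eq_star_mul_self_of_posDef {H : Matrix ι ι 𝕜} (hH : H.PosDef) :
    ∃ U : (Matrix ι ι 𝕜)ˣ, H = star (U : Matrix ι ι 𝕜) * U := by
  obtain ⟨B, hB, rfl⟩ :=
    CStarAlgebra.isStrictlyPositive_iff_eq_star_mul_self.mp hH.isStrictlyPositive
  exact ⟨hB.unit, rfl⟩

theorem exists_nonpos_generalized_eigenvector {S H : Matrix ι ι 𝕜} (hS : S.IsHermitian)
    (hH : H.PosDef) (hSH : ¬ S.PosDef) :
    ∃ v ≠ 0, ∃ μ : ℝ, μ ≤ 0 ∧ S *ᵥ v = μ • (H *ᵥ v) := by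
  obtain ⟨U, rfl⟩ := exists_eq_star_mul_self_of_posDef hH
  set B : Matrix ι ι 𝕜 := ↑U
  set C : Matrix ι ι 𝕜 := ↑U⁻¹
  set T := star C * S * C
  have hST : S = star B * T * B := by
    rw [← mul_assoc, ← mul_assoc, ← star_mul, U.inv_mul, star_one, one_mul, mul_assoc, U.inv_mul,
      mul_one]
  have hT : T.IsHermitian := isHermitian_conjTranspose_mul_mul _ hS
  obtain ⟨i, hi⟩ : ∃ i, hT.eigenvalues i ≤ 0 := by
    contrapose! hSH
    rw [hST, U.isUnit.posDef_star_left_conjugate_iff]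
    exact hT.posDef_iff_eigenvalues_pos.mpr hSH
  set u : ι → 𝕜 := ⇑(hT.eigenvectorBasis i)
  have hBCu : B *ᵥ (C *ᵥ u) = u := by
    rw [mulVec_mulVec, U.mul_inv, one_mulVec]
  refine ⟨C *ᵥ u, ?_, hT.eigenvalues i, hi, ?_⟩
  · have hu : u ≠ 0 := by simpa [u] using hT.eigenvectorBasis.orthonormal.ne_zero i
    exact fun h => hu (by rw [← hBCu, h, mulVec_zero])
  · have hTu : T *ᵥ u = hT.eigenvalues i • u := hT.mulVec_eigenvectorBasis i
    rw [hST, ← mulVec_mulVec, ← mulVec_mulVec, hBCu, hTu, ← mulVec_mulVec, hBCu, mulVec_smul]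
end

theorem posDefMat_iff_posDef {n : ℕ} {M : Matrix (Fin n) (Fin n) ℝ} (hM : M.IsSymm) :
    PosDefMat M ↔ M.PosDef := by
  simp [PosDefMat, posDef_iff_dotProduct_mulVec, hM]

theorem mul_norm_lt_norm_diagonal_mulVec {ι : Type*} [Fintype ι] [DecidableEq ι]
    {d x : ι → ℝ} {c : ℝ} (hc : 0 ≤ c) (hd : ∀ i, c < |d i|) (hx : x ≠ 0) :
    c * ‖WithLp.toLp 2 x‖ < ‖WithLp.toLp 2 (diagonal d *ᵥ x)‖ := by
  have hd2 i : c ^ 2 < d i ^ 2 := by simpa using (sq_lt_sq₀ hc (abs_nonneg _)).2 (hd i)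
  obtain ⟨j, hj⟩ := Function.ne_iff.mp hx
  have hsq : (c * ‖WithLp.toLp 2 x‖) ^ 2 < ‖WithLp.toLp 2 (diagonal d *ᵥ x)‖ ^ 2 := by
    simp only [mul_pow, EuclideanSpace.real_norm_sq_eq, mulVec_diagonal, Finset.mul_sum]
    refine Finset.sum_lt_sum (fun i _ => ?_) ⟨j, Finset.mem_univ j, ?_⟩
    · exact mul_le_mul_of_nonneg_right (hd2 i).le (sq_nonneg _)
    · exact mul_lt_mul_of_pos_right (hd2 j) (sq_pos_of_ne_zero hj)
  exact lt_of_pow_lt_pow_left₀ 2 (norm_nonneg _) hsq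

theorem norm_mulVec_le_matOpNorm {n : ℕ} (M : Matrix (Fin n) (Fin n) ℝ) (x : Fin n → ℝ) :
    ‖WithLp.toLp 2 (M *ᵥ x)‖ ≤ matOpNorm M * ‖WithLp.toLp 2 x‖ :=
  (toEuclideanCLM (𝕜 := ℝ) M).le_opNorm (WithLp.toLp 2 x)

theorem bauerFike {n : ℕ} {P E : Matrix (Fin n) (Fin n) ℝ} {d v : Fin n → ℝ} {μ : ℝ}
    (hP : IsUnit P.det) (hv : v ≠ 0) (h : (P * diagonal d * P⁻¹) *ᵥ v = μ • v + E *ᵥ v) :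
    ∃ i, |d i - μ| ≤ matOpNorm P * matOpNorm P⁻¹ * matOpNorm E := by
  set w := P⁻¹ *ᵥ v
  have hPw : P *ᵥ w = v := by rw [mulVec_mulVec, mul_nonsing_inv _ hP, one_mulVec]
  have hw : w ≠ 0 := fun hw => hv (by rw [← hPw, hw, mulVec_zero])
  have hshift : diagonal (fun i => d i - μ) *ᵥ w = P⁻¹ *ᵥ (E *ᵥ (P *ᵥ w)) := by
    have hdw : diagonal d *ᵥ w = μ • w + P⁻¹ *ᵥ (E *ᵥ v) := by
      have := congrArg (P⁻¹ *ᵥ ·) h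
      simpa [mulVec_mulVec, mulVec_add, mulVec_smul, ← mul_assoc, nonsing_inv_mul _ hP, w]
        using this
    ext i
    have := congrFun hdw i
    simp only [mulVec_diagonal, Pi.add_apply, Pi.smul_apply, smul_eq_mul] at this ⊢
    rw [hPw]; linarith
  by_contra! hsmall
  have hκ : 0 ≤ matOpNorm P * matOpNorm P⁻¹ * matOpNorm E := by
    unfold matOpNorm; positivity
  have hlow := mul_norm_lt_norm_diagonal_mulVec hκ hsmall hw
  have hup : ‖WithLp.toLp 2 (diagonal (fun i => d i - μ) *ᵥ w)‖ ≤
      matOpNorm P⁻¹ * (matOpNorm E * (matOpNorm P * ‖WithLp.toLp 2 w‖)) := by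
    rw [hshift]
    refine (norm_mulVec_le_matOpNorm _ _).trans (mul_le_mul_of_nonneg_left ?_ (norm_nonneg _))
    exact (norm_mulVec_le_matOpNorm _ _).trans
      (mul_le_mul_of_nonneg_left (norm_mulVec_le_matOpNorm _ _) (norm_nonneg _))
  linarith

theorem posDef_of_bauerFike_perturbation_general {n : ℕ}
    (A P Λ H S N : Matrix (Fin n) (Fin n) ℝ) (lamStar : ℝ)
    (hP : IsUnit P.det) (hΛ : Λ.IsDiag) (hA : A = P * Λ * P⁻¹)
    (hΛlam : ∀ i, lamStar ≤ Λ i i)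
    (hHsymm : H.IsSymm) (hHpd : PosDefMat H) (hSsymm : S.IsSymm)
    (hHA : H * A = S + N)
    (hsmall : matOpNorm P * matOpNorm P⁻¹ * matOpNorm (H⁻¹ * N) < lamStar) :
    PosDefMat S := by
  have hH : H.PosDef := (posDefMat_iff_posDef hHsymm).mp hHpd
  rw [posDefMat_iff_posDef hSsymm]
  by_contra hS
  obtain ⟨v, hv, μ, hμ, hSv⟩ :=
    exists_nonpos_generalized_eigenvector (isHermitian_iff_isSymm.mpr hSsymm) hH hS
  have hAv : (P * diagonal Λ.diag * P⁻¹) *ᵥ v = μ • v + (H⁻¹ * N) *ᵥ v := by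
    have hHdet : IsUnit H.det := (isUnit_iff_isUnit_det H).mp hH.isUnit
    rw [hΛ.diagonal_diag, ← hA]
    refine mulVec_injective_of_isUnit hH.isUnit ?_
    rw [mulVec_mulVec, hHA, add_mulVec, hSv, mulVec_add, mulVec_smul, mulVec_mulVec,
      mul_nonsing_inv_cancel_left _ _ hHdet]
  obtain ⟨i, hi⟩ := bauerFike hP hv hAv
  simp only [diag_apply] at hi
  linarith [hΛlam i, le_abs_self (Λ i i - μ)]

/-- Bauer–Fike perturbation: if `A = P·Λ·P⁻¹` is diagonalizable with diagonal
entries `≥ λ* > 0`, `H` is symmetric positive definite, `S` symmetric, and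
`H·A = S + N` with `‖P‖·‖P⁻¹‖·‖H⁻¹·N‖ < λ*`, then `S` is positive definite. -/
theorem posDef_of_bauerFike_perturbation {n : ℕ}
    (A P Λ H S N : Matrix (Fin n) (Fin n) ℝ) (lamStar : ℝ)
    (hP : IsUnit P.det) (hΛ : Λ.IsDiag) (hA : A = P * Λ * P⁻¹)
    (hlam : 0 < lamStar) (hΛlam : ∀ i, lamStar ≤ Λ i i)
    (hHsymm : H.IsSymm) (hHpd : PosDefMat H) (hSsymm : S.IsSymm)
    (hHA : H * A = S + N)
    (hsmall : matOpNorm P * matOpNorm P⁻¹ * matOpNorm (H⁻¹ * N) < lamStar) :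
    PosDefMat S :=
  posDef_of_bauerFike_perturbation_general A P Λ H S N lamStar hP hΛ hA hΛlam hHsymm hHpd hSsymm hHA
    hsmall
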